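/- For every initial configuration X_0 ∈ C, every request sequence ρ = (r_1, …, r_t), and every WFA trajectory X_0, X_1, …, X_t for ρ, one has OPT(ρ) + WFA(ρ) ≤ Σ_{i=0}^{t−1} ∇(w_i, r_{i+1}), where w_0(X) = d(X_0, X) and w_i = T_{r_i}(w_{i−1}). -/

import Mathlib

open scoped BigOperators

/-- A configuration: a multiset of `k` points of `M`. -/
abbrev Conf (M : Type*) (k : ℕ) := Sym M k

/-- Minimum matching cost between two configurations: the minimum over enumerations
of the two multisets of the sum of pointwise distances. -/
noncomputable def confDist {M : Type*} [MetricSpace M] {k : ℕ} (X Y : Conf M k) : ℝ :=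
  sInf { c : ℝ | ∃ u v : Fin k → M,
    ((List.ofFn u : List M) : Multiset M) = (X : Multiset M) ∧
    ((List.ofFn v : List M) : Multiset M) = (Y : Multiset M) ∧
    c = ∑ i, dist (u i) (v i) }

/-- The work-function update operator `T_r`. -/
noncomputable def wfUpdate {M : Type*} [MetricSpace M] {k : ℕ}
    (w : Conf M k → ℝ) (r : M) (X : Conf M k) : ℝ :=
  sInf { c : ℝ | ∃ Y : Conf M k, r ∈ Y ∧ c = w Y + confDist X Y }

/-- The extended cost `∇(w, r)`. -/
noncomputable def extCost {M : Type*} [MetricSpace M] {k : ℕ}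
    (w : Conf M k → ℝ) (r : M) : ℝ :=
  sSup { c : ℝ | ∃ X : Conf M k, c = wfUpdate w r X - w X }

/-- The OPT increase `ΔOPT(w, r)`. -/
noncomputable def optIncrease {M : Type*} [MetricSpace M] {k : ℕ}
    (w : Conf M k → ℝ) (r : M) : ℝ :=
  sInf (Set.range (wfUpdate w r)) - sInf (Set.range w)

/-- The normalized work function `ŵ = w - (min w)·1`. -/
noncomputable def normWF {M : Type*} [MetricSpace M] {k : ℕ}
    (w : Conf M k → ℝ) : Conf M k → ℝ :=
  fun X => w X - sInf (Set.range w)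

/-- `w` is 1-Lipschitz with respect to the matching distance on configurations. -/
def LipschitzWF {M : Type*} [MetricSpace M] {k : ℕ} (w : Conf M k → ℝ) : Prop :=
  ∀ X Y : Conf M k, |w X - w Y| ≤ confDist X Y

/-- The initial work function `w₀(X) = d(X₀, X)` for initial configuration `X₀`. -/
noncomputable def initWF {M : Type*} [MetricSpace M] {k : ℕ} (X₀ : Conf M k) :
    Conf M k → ℝ :=
  fun X => confDist X₀ X

/-- The work function `w_i` after serving the first `i` requests of the sequence `ρ`,
starting from `w₀ = d(X₀, ·)`. -/
noncomputable def wfAt {M : Type*} [MetricSpace M] {k : ℕ} (X₀ : Conf M k)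
    (ρ : List M) (i : ℕ) : Conf M k → ℝ :=
  (ρ.take i).foldl (fun w r => wfUpdate w r) (initWF X₀)

/-- `Xs` is a trajectory of the Work Function Algorithm for the request sequence `ρ`
started at `X₀`: `Xs 0 = X₀` and, for each `i < |ρ|`, the configuration `Xs (i+1)`
contains the request `ρ.get i` and minimizes `w_{i+1}(Y) + d(X_i, Y)` over all
configurations `Y` containing the request. -/
def IsWFATrajectory {M : Type*} [MetricSpace M] {k : ℕ} (X₀ : Conf M k) (ρ : List M)
    (Xs : ℕ → Conf M k) : Prop :=
  Xs 0 = X₀ ∧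
  ∀ i : Fin ρ.length,
    ρ.get i ∈ Xs (↑i + 1) ∧
    wfAt X₀ ρ (↑i + 1) (Xs (↑i + 1)) + confDist (Xs ↑i) (Xs (↑i + 1)) =
      sInf { c : ℝ | ∃ Y : Conf M k, ρ.get i ∈ Y ∧
        c = wfAt X₀ ρ (↑i + 1) Y + confDist (Xs ↑i) Y }

/-- The online cost of the trajectory `Xs` on `ρ`: `WFA(ρ) = Σ_{i<t} d(X_i, X_{i+1})`. -/
noncomputable def WFACost {M : Type*} [MetricSpace M] {k : ℕ} (ρ : List M)
    (Xs : ℕ → Conf M k) : ℝ :=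
  ∑ i : Fin ρ.length, confDist (Xs ↑i) (Xs (↑i + 1))

/-- The offline optimum `OPT(ρ) = min_X w_t(X)`. -/
noncomputable def OPTCost {M : Type*} [MetricSpace M] {k : ℕ} (X₀ : Conf M k)
    (ρ : List M) : ℝ :=
  sInf (Set.range (wfAt X₀ ρ ρ.length))

/-
Write `φᵢ = wᵢ(Xᵢ)` and `r = rᵢ₊₁`. Since `wᵢ₊₁ = T_r wᵢ ≤ wᵢ` on
configurations containing `r`, the WFA choice gives
`φᵢ₊₁ + d(Xᵢ, Xᵢ₊₁) = min_{Y ∋ r} (wᵢ₊₁(Y) + d(Xᵢ, Y)) ≤ min_{Y ∋ r} (wᵢ(Y) + d(Xᵢ, Y))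
  = wᵢ₊₁(Xᵢ) ≤ φᵢ + ∇(wᵢ, r)`.
Summing over `i`, the `φ` terms telescope to `φₜ - φ₀ = wₜ(Xₜ) ≥ OPT`, as `φ₀ = d(X₀, X₀) = 0`.
-/

theorem Sym.exists_ofFn_eq {α : Type*} {k : ℕ} (X : Sym α k) :
    ∃ u : Fin k → α, ((List.ofFn u : List α) : Multiset α) = (X : Multiset α) := by
  have hlen : (X : Multiset α).toList.length = k := by simp
  refine ⟨fun i => (X : Multiset α).toList.get (Fin.cast hlen.symm i), ?_⟩
  rw [← List.ofFn_congr hlen, List.ofFn_get, Multiset.coe_toList]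

theorem csInf_setOf_exists_le {α : Type*} [Finite α] (g : α → ℝ) {P : α → Prop} {a : α}
    (ha : P a) : sInf { c : ℝ | ∃ b, P b ∧ c = g b } ≤ g a :=
  csInf_le ((Set.finite_range g).subset (by rintro _ ⟨b, -, rfl⟩; exact ⟨b, rfl⟩)).bddBelow
    ⟨a, ha, rfl⟩

section WorkFunction

variable {M : Type*} [MetricSpace M] {k : ℕ}

theorem confDist_self (X : Conf M k) : confDist X X = 0 := by
  obtain ⟨u, hu⟩ := Sym.exists_ofFn_eq X
  refine IsLeast.csInf_eq ⟨⟨u, u, hu, hu, by simp⟩, ?_⟩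
  rintro c ⟨u, v, -, -, rfl⟩
  positivity

theorem wfUpdate_le [Finite M] (w : Conf M k → ℝ) {r : M} (X : Conf M k) {Y : Conf M k}
    (hY : r ∈ Y) : wfUpdate w r X ≤ w Y + confDist X Y :=
  csInf_setOf_exists_le (fun Y => w Y + confDist X Y) hY

theorem wfUpdate_le_self [Finite M] (w : Conf M k → ℝ) {r : M} {Y : Conf M k}
    (hY : r ∈ Y) : wfUpdate w r Y ≤ w Y := by
  simpa [confDist_self] using wfUpdate_le w Y hY

theorem wfUpdate_sub_le_extCost [Finite M] (w : Conf M k → ℝ) (r : M) (X : Conf M k) :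
    wfUpdate w r X - w X ≤ extCost w r := by
  refine le_csSup ((Set.finite_range fun X => wfUpdate w r X - w X).subset ?_).bddAbove ⟨X, rfl⟩
  rintro _ ⟨Y, rfl⟩
  exact ⟨Y, rfl⟩

theorem wfUpdate_add_confDist_le_add_extCost [Finite M] (w : Conf M k → ℝ) {r : M}
    {X X' : Conf M k} (hX' : r ∈ X')
    (hmin : ∀ Y, r ∈ Y → wfUpdate w r X' + confDist X X' ≤ wfUpdate w r Y + confDist X Y) :
    wfUpdate w r X' + confDist X X' ≤ w X + extCost w r := by
  have hle : wfUpdate w r X' + confDist X X' ≤ wfUpdate w r X := by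
    refine le_csInf ⟨_, X', hX', rfl⟩ ?_
    rintro _ ⟨Y, hY, rfl⟩
    linarith [hmin Y hY, wfUpdate_le_self w hY]
  linarith [wfUpdate_sub_le_extCost w r X]

theorem wfAt_zero (X₀ : Conf M k) (ρ : List M) : wfAt X₀ ρ 0 = initWF X₀ := rfl

theorem wfAt_succ (X₀ : Conf M k) (ρ : List M) (i : Fin ρ.length) :
    wfAt X₀ ρ (i + 1) = wfUpdate (wfAt X₀ ρ i) (ρ.get i) := by
  rw [wfAt, List.take_add_one, List.getElem?_eq_getElem i.2]
  simp only [Option.toList_some, List.foldl_concat, List.get_eq_getElem]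
  rfl

theorem IsWFATrajectory.step [Finite M] {X₀ : Conf M k} {ρ : List M} {Xs : ℕ → Conf M k}
    (hXs : IsWFATrajectory X₀ ρ Xs) (i : Fin ρ.length) :
    wfAt X₀ ρ (i + 1) (Xs (i + 1)) + confDist (Xs i) (Xs (i + 1)) ≤
      wfAt X₀ ρ i (Xs i) + extCost (wfAt X₀ ρ i) (ρ.get i) := by
  obtain ⟨hmem, hmin⟩ := hXs.2 i
  rw [wfAt_succ] at hmin ⊢
  refine wfUpdate_add_confDist_le_add_extCost _ hmem fun Y hY => ?_
  exact hmin ▸ csInf_setOf_exists_le (fun Y => _ + confDist (Xs i) Y) hY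

end WorkFunction

theorem opt_add_wfa_le_sum_extCost_general {M : Type*} [Fintype M] [MetricSpace M]
    {k : ℕ} (X₀ : Conf M k) (ρ : List M) (Xs : ℕ → Conf M k)
    (hXs : IsWFATrajectory X₀ ρ Xs) :
    OPTCost X₀ ρ + WFACost ρ Xs ≤
      ∑ i : Fin ρ.length, extCost (wfAt X₀ ρ ↑i) (ρ.get i) := by
  set φ : ℕ → ℝ := fun j => wfAt X₀ ρ j (Xs j)
  have hφ₀ : φ 0 = 0 := by simp [φ, wfAt_zero, initWF, hXs.1, confDist_self]
  have hOPT : OPTCost X₀ ρ ≤ φ ρ.length :=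
    csInf_le (Set.finite_range _).bddBelow ⟨Xs ρ.length, rfl⟩
  have htelescope : ∑ i : Fin ρ.length, (φ (i + 1) - φ i) = φ ρ.length - φ 0 := by
    rw [Fin.sum_univ_eq_sum_range (fun i => φ (i + 1) - φ i), Finset.sum_range_sub]
  have hsteps := Finset.sum_le_sum fun i (_ : i ∈ Finset.univ) => hXs.step i
  simp only [Finset.sum_add_distrib] at hsteps
  rw [Finset.sum_sub_distrib] at htelescope
  unfold WFACost
  linarith

/-- For every initial configuration, request sequence and WFA trajectory,
`OPT(ρ) + WFA(ρ) ≤ Σ_{i=0}^{t-1} ∇(w_i, r_{i+1})`. -/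
theorem opt_add_wfa_le_sum_extCost {M : Type*} [Fintype M] [MetricSpace M]
    {k : ℕ} (hk : 0 < k) (X₀ : Conf M k) (ρ : List M) (Xs : ℕ → Conf M k)
    (hXs : IsWFATrajectory X₀ ρ Xs) :
    OPTCost X₀ ρ + WFACost ρ Xs ≤
      ∑ i : Fin ρ.length, extCost (wfAt X₀ ρ ↑i) (ρ.get i) :=
  opt_add_wfa_le_sum_extCost_general X₀ ρ Xs hXs
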